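/- Let P and Q be broken combs and let (P,x) and (Q,x') be n-generated models over the same n variables based on P and Q respectively. If (P,x) and (Q,x') are 3-bisimilar, then they are fully bisimilar. -/

import Mathlib

/-! # Common framework: superintuitionistic logics, Kripke frames and models -/

/-! ## Intuitionistic propositional formulas -/

inductive Form : Type
  | var : ℕ → Form
  | bot : Form
  | top : Form
  | and : Form → Form → Form
  | or  : Form → Form → Form
  | imp : Form → Form → Form
deriving DecidableEq

namespace Form

/-- Implication depth of a formula. -/
def depth : Form → ℕ
  | var _ => 0
  | bot => 0
  | top => 0
  | and φ ψ => max φ.depth ψ.depth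
  | or φ ψ => max φ.depth ψ.depth
  | imp φ ψ => max φ.depth ψ.depth + 1

/-- All propositional variables of the formula are among `p_0, …, p_{m-1}`. -/
def varsLt (m : ℕ) : Form → Prop
  | var p => p < m
  | bot => True
  | top => True
  | and φ ψ => φ.varsLt m ∧ ψ.varsLt m
  | or φ ψ => φ.varsLt m ∧ ψ.varsLt m
  | imp φ ψ => φ.varsLt m ∧ ψ.varsLt m

/-- Uniform substitution. -/
def subst (σ : ℕ → Form) : Form → Form
  | var p => σ p
  | bot => bot
  | top => top
  | and φ ψ => and (φ.subst σ) (ψ.subst σ)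
  | or φ ψ => or (φ.subst σ) (ψ.subst σ)
  | imp φ ψ => imp (φ.subst σ) (ψ.subst σ)

/-- Biconditional. -/
def iff (φ ψ : Form) : Form := and (imp φ ψ) (imp ψ φ)

/-- Negation. -/
def neg (φ : Form) : Form := imp φ bot

end Form

/-! ## IPC and superintuitionistic logics -/

/-- A Hilbert-style axiomatization of intuitionistic propositional logic. -/
inductive IPC : Form → Prop
  | ax1 (φ ψ : Form) : IPC (.imp φ (.imp ψ φ))
  | ax2 (φ ψ χ : Form) :
      IPC (.imp (.imp φ (.imp ψ χ)) (.imp (.imp φ ψ) (.imp φ χ)))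
  | andE1 (φ ψ : Form) : IPC (.imp (.and φ ψ) φ)
  | andE2 (φ ψ : Form) : IPC (.imp (.and φ ψ) ψ)
  | andI (φ ψ : Form) : IPC (.imp φ (.imp ψ (.and φ ψ)))
  | orI1 (φ ψ : Form) : IPC (.imp φ (.or φ ψ))
  | orI2 (φ ψ : Form) : IPC (.imp ψ (.or φ ψ))
  | orE (φ ψ χ : Form) :
      IPC (.imp (.imp φ χ) (.imp (.imp ψ χ) (.imp (.or φ ψ) χ)))
  | botE (φ : Form) : IPC (.imp .bot φ)
  | topI : IPC .top
  | mp (φ ψ : Form) : IPC (.imp φ ψ) → IPC φ → IPC ψ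

/-- The set of theorems of IPC. -/
def IPCSet : Set Form := {φ | IPC φ}

/-- A superintuitionistic logic: a set of formulas containing all theorems of
IPC, closed under modus ponens and uniform substitution. -/
def IsSILogic (L : Set Form) : Prop :=
  IPCSet ⊆ L ∧
  (∀ φ ψ : Form, Form.imp φ ψ ∈ L → φ ∈ L → ψ ∈ L) ∧
  (∀ (φ : Form) (σ : ℕ → Form), φ ∈ L → φ.subst σ ∈ L)

/-- `oplus L Γ` is the least superintuitionistic logic containing `L` and `Γ`
(written `L ⊕ Γ`). -/
def oplus (L Γ : Set Form) : Set Form :=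
  ⋂₀ {M : Set Form | IsSILogic M ∧ L ⊆ M ∧ Γ ⊆ M}

/-- A logic is `n`-uniform if every formula is provably equivalent in it to a
formula of implication depth at most `n`. -/
def Uniform (L : Set Form) (n : ℕ) : Prop :=
  ∀ φ : Form, ∃ ψ : Form, ψ.depth ≤ n ∧ Form.iff φ ψ ∈ L

/-- A logic is locally tabular if over each finite tuple of variables there are
only finitely many formulas up to provable equivalence. -/
def LocallyTabular (L : Set Form) : Prop :=
  ∀ m : ℕ, ∃ Φ : Finset Form, ∀ φ : Form, φ.varsLt m → ∃ ψ ∈ Φ, Form.iff φ ψ ∈ L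

/-! ## Kripke frames (posets) -/

structure Frame : Type 1 where
  W : Type
  le : W → W → Prop
  refl : ∀ x, le x x
  trans : ∀ x y z, le x y → le y z → le x z
  antisymm : ∀ x y, le x y → le y x → x = y

namespace Frame

def lt (F : Frame) (a b : F.W) : Prop := F.le a b ∧ a ≠ b

/-- A valuation is persistent if it is preserved upwards. -/
def Persistent (F : Frame) (V : ℕ → F.W → Prop) : Prop :=
  ∀ p a b, F.le a b → V p a → V p b

/-- Kripke forcing. -/
def force (F : Frame) (V : ℕ → F.W → Prop) : Form → F.W → Prop
  | .var p, w => V p w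
  | .bot, _ => False
  | .top, _ => True
  | .and φ ψ, w => F.force V φ w ∧ F.force V ψ w
  | .or φ ψ, w => F.force V φ w ∨ F.force V ψ w
  | .imp φ ψ, w => ∀ v, F.le w v → F.force V φ v → F.force V ψ v

/-- `F ⊩ φ`. -/
def Valid (F : Frame) (φ : Form) : Prop :=
  ∀ V : ℕ → F.W → Prop, F.Persistent V → ∀ w : F.W, F.force V φ w

def Rooted (F : Frame) : Prop := ∃ r, ∀ w, F.le r w

/-- The subposet on a subset of the carrier. -/
def restrict (F : Frame) (s : Set F.W) : Frame where
  W := s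
  le a b := F.le a.1 b.1
  refl a := F.refl a.1
  trans a b c h1 h2 := F.trans a.1 b.1 c.1 h1 h2
  antisymm a b h1 h2 := Subtype.ext (F.antisymm a.1 b.1 h1 h2)

/-- The rooted upset `↑z`. -/
def up (F : Frame) (z : F.W) : Frame := F.restrict {w | F.le z w}

/-- There is a chain of `d` elements in `↑w` starting at `w`. -/
def hasChainUp (F : Frame) (w : F.W) (d : ℕ) : Prop :=
  ∃ f : Fin d → F.W, (∀ i : Fin d, (i : ℕ) = 0 → f i = w) ∧
    (∀ i j : Fin d, (i : ℕ) < (j : ℕ) → F.lt (f i) (f j))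

/-- The depth of `w` is `d`: the longest chain in `↑w` has exactly `d` elements. -/
def depthEq (F : Frame) (w : F.W) (d : ℕ) : Prop :=
  F.hasChainUp w d ∧ ¬ F.hasChainUp w (d + 1)

/-- The covering relation of the poset. -/
def covBy (F : Frame) (a b : F.W) : Prop :=
  F.lt a b ∧ ∀ c, F.lt a c → F.lt c b → False

end Frame

/-- A p-morphism of posets. -/
def IsPMorphism (P Q : Frame) (f : P.W → Q.W) : Prop :=
  (∀ a b, P.le a b → Q.le (f a) (f b)) ∧
  (∀ a b, Q.le (f a) b → ∃ a', P.le a a' ∧ f a' = b)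

/-- `Q` is a p-morphic image of `P`. -/
def PMorphicImage (P Q : Frame) : Prop :=
  ∃ f : P.W → Q.W, IsPMorphism P Q f ∧ Function.Surjective f

/-- Order isomorphism of posets. -/
def FrameIso (P Q : Frame) : Prop :=
  ∃ f : P.W → Q.W, Function.Bijective f ∧ ∀ a b, P.le a b ↔ Q.le (f a) (f b)

/-- The logic of a class of posets. -/
def LogK (K : Set Frame) : Set Form := {φ | ∀ F ∈ K, F.Valid φ}

/-- The logic of a single poset. -/
def FrameLog (F : Frame) : Set Form := {φ | F.Valid φ}

/-- `J` is a Yankov formula for the finite rooted poset `Q`: a finite poset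
refutes `J` exactly when `Q` is isomorphic to a rooted upset of one of its
p-morphic images. -/
def IsYankov (J : Form) (Q : Frame) : Prop :=
  ∀ P : Frame, Finite P.W →
    (¬ P.Valid J ↔ ∃ G : Frame, PMorphicImage P G ∧ ∃ z : G.W, FrameIso (G.up z) Q)

/-! ## Rooted Kripke models over `n` propositional variables -/

structure Model (n : ℕ) : Type 1 where
  W : Type
  le : W → W → Prop
  refl : ∀ x, le x x
  trans : ∀ x y z, le x y → le y z → le x z
  antisymm : ∀ x y, le x y → le y x → x = y
  root : W
  rooted : ∀ w, le root w
  col : W → Set (Fin n)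
  mono : ∀ a b, le a b → col a ⊆ col b

namespace Model

/-- The underlying poset of a model. -/
def frame {n : ℕ} (M : Model n) : Frame :=
  ⟨M.W, M.le, M.refl, M.trans, M.antisymm⟩

def force {n : ℕ} (M : Model n) : Form → M.W → Prop
  | .var p, w => ∃ h : p < n, (⟨p, h⟩ : Fin n) ∈ M.col w
  | .bot, _ => False
  | .top, _ => True
  | .and φ ψ, w => M.force φ w ∧ M.force ψ w
  | .or φ ψ, w => M.force φ w ∨ M.force ψ w
  | .imp φ ψ, w => ∀ v, M.le w v → M.force φ v → M.force ψ v

/-- Satisfaction at the root of the model. -/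
def Sat {n : ℕ} (M : Model n) (φ : Form) : Prop := M.force φ M.root

/-- (Full) bisimilarity of two rooted models. -/
def Bisim {n : ℕ} (M N : Model n) : Prop :=
  ∃ S : M.W → N.W → Prop,
    S M.root N.root ∧
    (∀ a b, S a b → M.col a = N.col b) ∧
    (∀ a b a', S a b → M.le a a' → ∃ b', N.le b b' ∧ S a' b') ∧
    (∀ a b b', S a b → N.le b b' → ∃ a', M.le a a' ∧ S a' b')

/-- `k`-bisimilarity of the points `x, y`, via a decreasing chain
`S k ⊆ ⋯ ⊆ S 0` of relations. -/
def NBisimAt {n : ℕ} (M N : Model n) (k : ℕ) (x : M.W) (y : N.W) : Prop :=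
  ∃ S : ℕ → M.W → N.W → Prop,
    (∀ j a b, S (j + 1) a b → S j a b) ∧
    S k x y ∧
    (∀ a b, S 0 a b → M.col a = N.col b) ∧
    (∀ j a b a', j < k → S (j + 1) a b → M.le a a' →
        ∃ b', N.le b b' ∧ S j a' b') ∧
    (∀ j a b b', j < k → S (j + 1) a b → N.le b b' →
        ∃ a', M.le a a' ∧ S j a' b')

/-- `k`-bisimilarity of two rooted models. -/
def NBisim {n : ℕ} (M N : Model n) (k : ℕ) : Prop :=
  NBisimAt M N k M.root N.root

/-- The submodel on the rooted upset `↑z`. -/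
def up {n : ℕ} (M : Model n) (z : M.W) : Model n where
  W := {w : M.W // M.le z w}
  le a b := M.le a.1 b.1
  refl a := M.refl a.1
  trans a b c h1 h2 := M.trans a.1 b.1 c.1 h1 h2
  antisymm a b h1 h2 := Subtype.ext (M.antisymm a.1 b.1 h1 h2)
  root := ⟨z, M.refl z⟩
  rooted w := w.2
  col a := M.col a.1
  mono a b h := M.mono a.1 b.1 h

/-- `(M, x) ≤ₖ (N, y)`: there is `z ≥ x` such that `(↑z, z)` is `k`-bisimilar
with `(N, y)`. -/
def LeBisim {n : ℕ} (M N : Model n) (k : ℕ) : Prop :=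
  ∃ z : M.W, M.le M.root z ∧ NBisim (M.up z) N k

/-- Two points of a model are bisimilar. -/
def PointsBisim {n : ℕ} (M : Model n) (a b : M.W) : Prop :=
  ∃ S : M.W → M.W → Prop,
    S a b ∧
    (∀ x y, S x y → M.col x = M.col y) ∧
    (∀ x y x', S x y → M.le x x' → ∃ y', M.le y y' ∧ S x' y') ∧
    (∀ x y y', S x y → M.le y y' → ∃ x', M.le x x' ∧ S x' y')

/-- A model over `n` variables is (`n`-)generated if it contains no two
distinct bisimilar points. -/
def Generated {n : ℕ} (M : Model n) : Prop :=
  ∀ a b : M.W, M.PointsBisim a b → a = b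

/-- Isomorphism of models: a root-preserving, color-preserving order
isomorphism. -/
def Iso {n : ℕ} (M N : Model n) : Prop :=
  ∃ f : M.W → N.W, Function.Bijective f ∧ f M.root = N.root ∧
    (∀ a b, M.le a b ↔ N.le (f a) (f b)) ∧ (∀ a, N.col (f a) = M.col a)

/-- `M` is a model over the class of posets `K`: its underlying poset is a
p-morphic image of a rooted upset of a member of `K`. -/
def InClass {n : ℕ} (K : Set Frame) (M : Model n) : Prop :=
  ∃ F ∈ K, ∃ z : F.W, PMorphicImage (F.up z) M.frame

/-- The model on the rooted upset `↑z` of a frame `F`, with coloring `c`. -/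
def ofFrame (F : Frame) (z : F.W) (n : ℕ) (c : (F.up z).W → Set (Fin n))
    (hc : ∀ a b : (F.up z).W, (F.up z).le a b → c a ⊆ c b) : Model n where
  W := (F.up z).W
  le := (F.up z).le
  refl := (F.up z).refl
  trans := (F.up z).trans
  antisymm := (F.up z).antisymm
  root := ⟨z, F.refl z⟩
  rooted w := w.2
  col := c
  mono := hc

end Model

/-! ## Boolean sums and stacks -/

/-- A (finite rooted) poset is a Boolean sum: it is rooted, covers decrease the
depth by exactly one, and every point of depth `k+1` lies below every point of
depth `k`. -/
def IsBooleanSum (F : Frame) : Prop :=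
  F.Rooted ∧
  (∀ a b da db, F.covBy a b → F.depthEq a da → F.depthEq b db → da = db + 1) ∧
  (∀ a b k, F.depthEq a (k + 1) → F.depthEq b k → F.le a b)

/-- `F` contains a `k`-stack: `k` consecutive layers (sets of points of equal
depth) each containing at least two points. -/
def HasStack (F : Frame) (k : ℕ) : Prop :=
  ∃ j : ℕ, ∀ i : ℕ, j ≤ i → i < j + k →
    ∃ a b : F.W, a ≠ b ∧ F.depthEq a i ∧ F.depthEq b i

/-! ## The posets Q₁, …, Q₈ -/

def q1le : Fin 4 → Fin 4 → Bool := fun a b =>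
  a = b || a = 0 || (a = 1 && b = 3)
def q2le : Fin 5 → Fin 5 → Bool := fun a b =>
  a = b || a = 0 || (a = 1 && (b = 3 || b = 4)) || (a = 2 && b = 4)
def q3le : Fin 5 → Fin 5 → Bool := fun a b =>
  a = b || a = 0 || (a = 1 && b = 4) || (a = 2 && (b = 3 || b = 4)) ||
    (a = 3 && b = 4)
def q4le : Fin 5 → Fin 5 → Bool := fun a b =>
  a = b || a = 0 || ((a = 1 || a = 2) && (b = 3 || b = 4))
def q5le : Fin 6 → Fin 6 → Bool := fun a b =>
  a = b || a = 0 || b = 5 || ((a = 1 || a = 2) && (b = 3 || b = 4))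
def q6le : Fin 4 → Fin 4 → Bool := fun a b =>
  a = b || a = 0 || b = 3
def q7le : Fin 5 → Fin 5 → Bool := fun a b =>
  a = b || a = 0 || (a = 1 && b = 3) || (a = 2 && b = 4)
def q8le : Fin 4 → Fin 4 → Bool := fun a b =>
  a = b || a = 0

/-- `Q₁`: root `0`; immediate successors `1`, `2`; `2` maximal; `3` the unique
(maximal) immediate successor of `1`. -/
def Q1f : Frame :=
  ⟨Fin 4, fun a b => q1le a b = true, by decide, by decide, by decide⟩
/-- `Q₂`: root `0`; immediate successors `1`, `2`; maximal points `3`, `4`;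
`1 < 3`, `1 < 4`, `2 < 4`, `2 ≮ 3`. -/
def Q2f : Frame :=
  ⟨Fin 5, fun a b => q2le a b = true, by decide, by decide, by decide⟩
/-- `Q₃`: root `0`; immediate successors `1`, `2`; `3` covers `2`; top `4`
with `1 < 4` and `3 < 4`. -/
def Q3f : Frame :=
  ⟨Fin 5, fun a b => q3le a b = true, by decide, by decide, by decide⟩
/-- `Q₄`: root `0`; `1`, `2` cover the root; maximal `3`, `4` above both `1`
and `2`. -/
def Q4f : Frame :=
  ⟨Fin 5, fun a b => q4le a b = true, by decide, by decide, by decide⟩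
/-- `Q₅`: `Q₄` with a greatest element `5` added on top. -/
def Q5f : Frame :=
  ⟨Fin 6, fun a b => q5le a b = true, by decide, by decide, by decide⟩
/-- `Q₆`: the diamond. -/
def Q6f : Frame :=
  ⟨Fin 4, fun a b => q6le a b = true, by decide, by decide, by decide⟩
/-- `Q₇`: root `0`; `1 < 3`, `2 < 4`, and no other strict relations above the
root. -/
def Q7f : Frame :=
  ⟨Fin 5, fun a b => q7le a b = true, by decide, by decide, by decide⟩
/-- `Q₈`: a root with three pairwise incomparable maximal points. -/
def Q8f : Frame :=
  ⟨Fin 4, fun a b => q8le a b = true, by decide, by decide, by decide⟩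

/-! ## Particular logics -/

/-- The one-element poset. -/
def unitFrame : Frame :=
  ⟨PUnit, fun _ _ => True, fun _ => trivial, fun _ _ _ _ _ => trivial,
    fun a b _ _ => Subsingleton.elim a b⟩

/-- The two-element chain. -/
def chain2 : Frame :=
  ⟨Bool, fun a b => a ≤ b, le_refl, fun _ _ _ => le_trans,
    fun _ _ => le_antisymm⟩

/-- Classical propositional logic: the logic of the one-element poset. -/
def CPC : Set Form := FrameLog unitFrame

/-- The logic of the two-element chain. -/
def Sme : Set Form := FrameLog chain2

/-- The weak Peirce law `(q → p) ∨ (((p → q) → p) → p)`. -/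
def wPLax : Form :=
  .or (.imp (.var 1) (.var 0))
    (.imp (.imp (.imp (.var 0) (.var 1)) (.var 0)) (.var 0))

/-- The logic `wPL = IPC ⊕ (q → p) ∨ (((p → q) → p) → p)`. -/
def wPL : Set Form := oplus IPCSet {wPLax}

/-- The bounded-width-2 axiom `⋁_{i≤2} (pᵢ → ⋁_{j≠i} pⱼ)`. -/
def bw2ax : Form :=
  .or (.imp (.var 0) (.or (.var 1) (.var 2)))
    (.or (.imp (.var 1) (.or (.var 0) (.var 2)))
      (.imp (.var 2) (.or (.var 0) (.var 1))))

/-- The axiom `¬p ∨ ¬¬p`. -/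
def kcax : Form := .or (Form.neg (.var 0)) (Form.neg (Form.neg (.var 0)))

/-- The logic `Box = wPL ⊕ bw₂ ⊕ (¬p ∨ ¬¬p)`. -/
def BoxLogic : Set Form := oplus wPL {bw2ax, kcax}

/-- The bounded-depth formulas. -/
def bd : ℕ → Form
  | 0 => .var 0
  | n + 1 => .or (.var (n + 1)) (.imp (.var (n + 1)) (bd n))

/-- The logic `BD_n = IPC ⊕ bd_n`. -/
def BD (n : ℕ) : Set Form := oplus IPCSet {bd n}

/-- A logic is of finite depth if it contains some `BD_n`. -/
def FiniteDepth (L : Set Form) : Prop := ∃ n, BD n ⊆ L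

/-! ## The Rieger–Nishimura ladder -/

/-- Points of the Rieger–Nishimura ladder: `inl k = L_k`, `inr k = R_k`. -/
abbrev RNpt : Type := ℕ ⊕ ℕ

/-- The covering relation of the Rieger–Nishimura ladder (`rnCov a b` means
`a ⋖ b`, i.e. `b` is an immediate successor of `a`). -/
inductive rnCov : RNpt → RNpt → Prop
  | ll (k : ℕ) : rnCov (.inl (k + 1)) (.inl k)
  | rr (k : ℕ) : rnCov (.inr (k + 1)) (.inr k)
  | rl (k : ℕ) : rnCov (.inr (k + 1)) (.inl k)
  | lr (k : ℕ) : rnCov (.inl (k + 2)) (.inr k)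

private def rnIdx : RNpt → ℕ
  | .inl k => 2 * k
  | .inr k => 2 * k + 1

private theorem rnCov_idx {a b : RNpt} (h : rnCov a b) : rnIdx b < rnIdx a := by
  cases h <;> simp [rnIdx] <;> omega

private theorem rnLe_idx {a b : RNpt} (h : Relation.ReflTransGen rnCov a b) :
    rnIdx b ≤ rnIdx a := by
  induction h with
  | refl => exact le_rfl
  | tail _ h₂ ih => exact le_trans (le_of_lt (rnCov_idx h₂)) ih

private theorem rnIdx_inj {a b : RNpt} (h : rnIdx a = rnIdx b) : a = b := by
  rcases a with a | a <;> rcases b with b | b <;> simp [rnIdx] at h ⊢ <;> omega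

/-- The Rieger–Nishimura ladder as a poset: the order is the reflexive
transitive closure of the covering relation. -/
def RN : Frame where
  W := RNpt
  le a b := Relation.ReflTransGen rnCov a b
  refl _ := Relation.ReflTransGen.refl
  trans _ _ _ h1 h2 := h1.trans h2
  antisymm _ _ h1 h2 := rnIdx_inj (le_antisymm (rnLe_idx h2) (rnLe_idx h1))

/-! ## Combs -/

def combLe (n : ℕ) : (Fin n ⊕ Fin n) → (Fin n ⊕ Fin n) → Prop
  | .inl i, .inl j => i ≤ j
  | .inl i, .inr j => i ≤ j
  | .inr i, .inr j => i = j
  | .inr _, .inl _ => False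

/-- The `n`-comb: base points `x_1 ≤ … ≤ x_n` (encoded `inl 0, …, inl (n-1)`)
and maximal teeth `y_1, …, y_n` (encoded `inr 0, …, inr (n-1)`), with
`x_i ≤ y_j ↔ i ≤ j` and the teeth pairwise incomparable. -/
def Comb (n : ℕ) : Frame where
  W := Fin n ⊕ Fin n
  le := combLe n
  refl := by rintro (i | i) <;> simp [combLe]
  trans := by
    rintro (i | i) (j | j) (k | k) h1 h2 <;> simp only [combLe] at * <;>
      first
        | exact le_trans h1 h2
        | exact h2 ▸ h1
  antisymm := by
    rintro (i | i) (j | j) h1 h2 <;> simp only [combLe] at * <;>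
      first
        | exact congrArg Sum.inl (le_antisymm h1 h2)
        | exact congrArg Sum.inr h1

/-- A broken `m`-comb: (isomorphic to) a subposet of the `m`-comb containing
all of the base points `x_1, …, x_m`. -/
def IsBrokenComb (F : Frame) (m : ℕ) : Prop :=
  ∃ s : Set (Comb m).W, (∀ i : Fin m, Sum.inl i ∈ s) ∧
    FrameIso F ((Comb m).restrict s)

/-- The logic of the class of all combs. -/
def LFC : Set Form := LogK {F | ∃ n, F = Comb n}

/-! ## The stacked models `M_n^k` and `N_n^k` -/

/-- Height index of a point: layer `j` (from the top) has index `j`, the root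
(`none`) has index `k+1`. -/
def stackIdx (k : ℕ) : Option (Fin (k + 1) × Bool) → ℕ
  | none => k + 1
  | some (j, _) => j

/-- Size of the color (an initial segment of the variables): the left point
(`false`) of layer `j` gets `1^{n-j}0^j`, the right point (`true`) gets
`1^{n-j-1}0^{j+1}`, and the root gets `1^r0^{n-r}`. -/
def stackColSize (n k r : ℕ) : Option (Fin (k + 1) × Bool) → ℕ
  | none => r
  | some (j, false) => n - j
  | some (j, true) => n - ((j : ℕ) + 1)

private theorem stackColSize_le (n k r : ℕ) (hr : r ≤ n - (k + 1))
    {a b : Option (Fin (k + 1) × Bool)} (h : stackIdx k b < stackIdx k a) :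
    stackColSize n k r a ≤ stackColSize n k r b := by
  rcases a with _ | ⟨j, _ | _⟩ <;> rcases b with _ | ⟨j', _ | _⟩ <;>
    simp only [stackIdx, stackColSize] at * <;> omega

/-- The common shape of `M_n^k` and `N_n^k`, with root color `1^r0^{n-r}`:
`k+1` layers of two points stacked on top of a root. -/
def stackModel (n k r : ℕ) (hr : r ≤ n - (k + 1)) : Model n where
  W := Option (Fin (k + 1) × Bool)
  le a b := a = b ∨ stackIdx k b < stackIdx k a
  refl _ := Or.inl rfl
  trans := by
    rintro a b c (rfl | h1) h2
    · exact h2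
    · rcases h2 with rfl | h2
      · exact Or.inr h1
      · exact Or.inr (h2.trans h1)
  antisymm := by
    rintro a b (rfl | h1) h2
    · rfl
    · rcases h2 with rfl | h2
      · rfl
      · omega
  root := none
  rooted := by
    rintro (_ | ⟨j, s⟩)
    · exact Or.inl rfl
    · exact Or.inr j.isLt
  col a := {i : Fin n | (i : ℕ) < stackColSize n k r a}
  mono := by
    rintro a b (rfl | h) i hi
    · exact hi
    · exact lt_of_lt_of_le hi (stackColSize_le n k r hr h)

/-- The model `M_n^k` (root color `1^{n-k-1}0^{k+1}`). -/
def Mmodel (n k : ℕ) : Model n := stackModel n k (n - (k + 1)) le_rfl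

/-- The model `N_n^k` (root color `1^{n-k-2}0^{k+2}`). -/
def Nmodel (n k : ℕ) : Model n := stackModel n k (n - (k + 2)) (by omega)

/-! ## The frames `S_n` -/

/-- Height index in `S_n`: the top point (`some none`) has index `0`, the two
points of the `j`-th middle layer have index `j+1`, and the root (`none`) has
index `n`. -/
def sIdx (n : ℕ) : Option (Option (Fin (n - 1) × Bool)) → ℕ
  | none => n
  | some none => 0
  | some (some (j, _)) => (j : ℕ) + 1

/-- The frame `S_n` (for `n ≥ 2`): the Boolean sum whose layers from top to
bottom have sizes `1, 2, …, 2, 1` (with `n - 1` layers of size `2`). -/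
def SFrame (n : ℕ) : Frame where
  W := Option (Option (Fin (n - 1) × Bool))
  le a b := a = b ∨ sIdx n b < sIdx n a
  refl _ := Or.inl rfl
  trans := by
    rintro a b c (rfl | h1) h2
    · exact h2
    · rcases h2 with rfl | h2
      · exact Or.inr h1
      · exact Or.inr (h2.trans h1)
  antisymm := by
    rintro a b (rfl | h1) h2
    · rfl
    · rcases h2 with rfl | h2
      · rfl
      · omega

/-!
Transferring a 3-bisimulation along the successors shows that the roots have the same 3-type
(color together with the 2-types of all successors), and "same 3-type" turns out to be a
bisimulation. In a finite generated model a point is maximal exactly when its upset is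
monochromatic, and maximal points are determined by their colors. In a broken comb the
non-maximal points form a chain, along which the 2-type is monotone (the color grows, the set
of successor 1-types shrinks), and two comparable points with the same 2-type are bisimilar,
hence equal. So when a non-maximal point `q` above `v` realises a 2-type required above a
successor `v'` of `v`, either `q` already lies above `v'` or `q ≤ v'` forces `q = v'`.
-/

namespace Model

variable {n : ℕ}

instance (M : Model n) : PartialOrder M.W where
  le := M.le
  le_refl := M.refl
  le_trans := M.trans
  le_antisymm := M.antisymm

/-- `typeₖ w` is the color of `w` together with the `(k-1)`-types of its successors. -/
def type1 (M : Model n) (w : M.W) : Set (Fin n) × Set (Set (Fin n)) :=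
  (M.col w, M.col '' Set.Ici w)

def type2 (M : Model n) (w : M.W) :
    Set (Fin n) × Set (Set (Fin n) × Set (Set (Fin n))) :=
  (M.col w, M.type1 '' Set.Ici w)

def type3 (M : Model n) (w : M.W) :
    Set (Fin n) × Set (Set (Fin n) × Set (Set (Fin n) × Set (Set (Fin n)))) :=
  (M.col w, M.type2 '' Set.Ici w)

def NonmaxComparable (M : Model n) : Prop :=
  ∀ a b : M.W, ¬IsMax a → ¬IsMax b → a ≤ b ∨ b ≤ a

variable {M N : Model n}

theorem image_Ici_eq_of_forth_back {α : Type*} {f : M.W → α} {g : N.W → α}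
    {R : M.W → N.W → Prop} (hR : ∀ a b, R a b → f a = g b) {x : M.W} {y : N.W}
    (forth : ∀ a, x ≤ a → ∃ b, y ≤ b ∧ R a b) (back : ∀ b, y ≤ b → ∃ a, x ≤ a ∧ R a b) :
    f '' Set.Ici x = g '' Set.Ici y := by
  apply Set.Subset.antisymm
  · rintro _ ⟨a, ha, rfl⟩
    obtain ⟨b, hb, hab⟩ := forth a ha
    exact ⟨b, hb, (hR a b hab).symm⟩
  · rintro _ ⟨b, hb, rfl⟩
    obtain ⟨a, ha, hab⟩ := back b hb
    exact ⟨a, ha, hR a b hab⟩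

theorem col_eq_of_type1_eq {a : M.W} {b : N.W} (h : M.type1 a = N.type1 b) :
    M.col a = N.col b :=
  congrArg Prod.fst h

theorem col_eq_of_type2_eq {a : M.W} {b : N.W} (h : M.type2 a = N.type2 b) :
    M.col a = N.col b :=
  congrArg Prod.fst h

theorem type3_eq_of_nbisimAt {x : M.W} {y : N.W} (h : M.NBisimAt N 3 x y) :
    M.type3 x = N.type3 y := by
  obtain ⟨S, hS, hxy, hcol, forth, back⟩ := h
  have h1 : ∀ a b, S 1 a b → M.type1 a = N.type1 b := fun a b hab =>
    Prod.ext (hcol a b (hS 0 a b hab)) (image_Ici_eq_of_forth_back hcol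
      (fun a' => forth 0 a b a' (by norm_num) hab) (fun b' => back 0 a b b' (by norm_num) hab))
  have h2 : ∀ a b, S 2 a b → M.type2 a = N.type2 b := fun a b hab =>
    Prod.ext (col_eq_of_type1_eq (h1 a b (hS 1 a b hab))) (image_Ici_eq_of_forth_back h1
      (fun a' => forth 1 a b a' (by norm_num) hab) (fun b' => back 1 a b b' (by norm_num) hab))
  exact Prod.ext (col_eq_of_type2_eq (h2 x y (hS 2 x y hxy))) (image_Ici_eq_of_forth_back h2
    (fun a' => forth 2 x y a' (by norm_num) hxy) (fun b' => back 2 x y b' (by norm_num) hxy))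

theorem type1_eq_of_type2_eq {a : M.W} {b : N.W} (h : M.type2 a = N.type2 b) :
    M.type1 a = N.type1 b := by
  have hcol : ∀ (K : Model n) (w : K.W), K.col '' Set.Ici w = Prod.fst '' (K.type2 w).2 :=
    fun K w => by simp only [type2, type1, Set.image_image]
  exact Prod.ext (col_eq_of_type2_eq h) (by rw [type1, type1, hcol, hcol, h])

theorem type1_of_isMax {w : M.W} (hw : IsMax w) : M.type1 w = (M.col w, {M.col w}) := by
  simp only [type1, hw.Ici_eq, Set.image_singleton]

theorem type2_of_isMax {w : M.W} (hw : IsMax w) :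
    M.type2 w = (M.col w, {(M.col w, {M.col w})}) := by
  simp only [type2, hw.Ici_eq, Set.image_singleton, type1_of_isMax hw]

theorem type2_eq_of_le_of_le {u w : M.W} {q v : N.W} (hqv : q ≤ v) (huw : u ≤ w)
    (hwq : M.type2 w = N.type2 q) (huv : M.type2 u = N.type2 v) :
    N.type2 q = N.type2 v := by
  -- `type2` is monotone for `⊆` on colors and `⊇` on successor types, and
  -- `type2 q ≤ type2 v = type2 u ≤ type2 w = type2 q`.
  have hcol : M.col w = N.col q := col_eq_of_type2_eq hwq
  have hcol' : M.col u = N.col v := col_eq_of_type2_eq huv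
  have himg : M.type1 '' Set.Ici w = N.type1 '' Set.Ici q := congrArg Prod.snd hwq
  have himg' : M.type1 '' Set.Ici u = N.type1 '' Set.Ici v := congrArg Prod.snd huv
  refine Prod.ext (Set.Subset.antisymm (N.mono q v hqv) ?_)
    (Set.Subset.antisymm ?_ (Set.image_mono (Set.Ici_subset_Ici.2 hqv)))
  · change N.col v ⊆ N.col q
    rw [← hcol', ← hcol]
    exact M.mono u w huw
  · change N.type1 '' Set.Ici q ⊆ N.type1 '' Set.Ici v
    rw [← himg, ← himg']
    exact Set.image_mono (Set.Ici_subset_Ici.2 huw)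

theorem eq_of_isMax_of_col_eq (hg : M.Generated) {a b : M.W} (ha : IsMax a) (hb : IsMax b)
    (h : M.col a = M.col b) : a = b := by
  refine hg a b ⟨fun x y => x = a ∧ y = b, ⟨rfl, rfl⟩, ?_, ?_, ?_⟩
  · rintro x y ⟨rfl, rfl⟩
    exact h
  · rintro x y x' ⟨rfl, rfl⟩ hx
    exact ⟨y, M.refl y, ha.eq_of_ge hx, rfl⟩
  · rintro x y y' ⟨rfl, rfl⟩ hy
    exact ⟨x, M.refl x, rfl, hb.eq_of_ge hy⟩

theorem isMax_of_forall_col_eq [Finite M.W] (hg : M.Generated) {w : M.W}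
    (h : ∀ v, w ≤ v → M.col v = M.col w) : IsMax w := by
  obtain ⟨q, hwq, hq⟩ := Finite.exists_le_maximal (p := fun _ : M.W => True) (a := w) trivial
  rw [maximal_true] at hq
  have hbisim : M.PointsBisim w q := by
    refine ⟨fun x y => w ≤ x ∧ y = q, ⟨le_rfl, rfl⟩, ?_, ?_, ?_⟩
    · rintro x y ⟨hx, rfl⟩
      rw [h x hx, h y hwq]
    · rintro x y x' ⟨hx, rfl⟩ hxx'
      exact ⟨y, M.refl y, hx.trans hxx', rfl⟩
    · rintro x y y' ⟨hx, rfl⟩ hy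
      exact ⟨x, M.refl x, hx, hq.eq_of_ge hy⟩
  rwa [hg w q hbisim]

theorem isMax_iff_type1 [Finite M.W] (hg : M.Generated) (w : M.W) :
    IsMax w ↔ (M.type1 w).2 = {(M.type1 w).1} := by
  refine ⟨fun hw => by rw [type1_of_isMax hw], fun h => isMax_of_forall_col_eq hg ?_⟩
  intro v hv
  have hmem : M.col v ∈ (M.type1 w).2 := ⟨v, hv, rfl⟩
  rwa [h] at hmem

theorem isMax_iff_of_type1_eq [Finite M.W] [Finite N.W] (hM : M.Generated) (hN : N.Generated)
    {a : M.W} {b : N.W} (h : M.type1 a = N.type1 b) : IsMax a ↔ IsMax b := by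
  rw [isMax_iff_type1 hM, isMax_iff_type1 hN, h]

theorem exists_isMax_col_eq_of_type2_eq [Finite M.W] [Finite N.W] (hM : M.Generated)
    (hN : N.Generated) {u w : M.W} {v : N.W} (h : M.type2 u = N.type2 v) (huw : u ≤ w)
    (hw : IsMax w) : ∃ z, v ≤ z ∧ IsMax z ∧ N.col z = M.col w := by
  have hmem : M.type1 w ∈ (N.type2 v).2 := h ▸ ⟨w, huw, rfl⟩
  obtain ⟨z, hvz, hzw⟩ := hmem
  exact ⟨z, hvz, (isMax_iff_of_type1_eq hN hM hzw).2 hw, col_eq_of_type1_eq hzw⟩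

theorem eq_of_le_of_type2_eq [Finite M.W] (hg : M.Generated) (hc : M.NonmaxComparable)
    {p p' : M.W} (hle : p ≤ p') (h : M.type2 p = M.type2 p') : p = p' := by
  refine hg p p' ⟨fun z z' => M.type2 z = M.type2 z' ∧ z ≤ z', ⟨h, hle⟩, ?_, ?_, ?_⟩
  · rintro z z' ⟨hzz', -⟩
    exact col_eq_of_type2_eq hzz'
  · rintro z z' w ⟨hzz', hzle⟩ hzw
    by_cases hz'w : z' ≤ w
    · exact ⟨w, hz'w, rfl, M.refl w⟩
    have hwz' : w ≤ z' := by
      by_cases hz : IsMax z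
      · rwa [← hz.eq_of_le hzw]
      have hz' : ¬IsMax z' := (isMax_iff_of_type1_eq hg hg (type1_eq_of_type2_eq hzz')).not.1 hz
      have hw : ¬IsMax w := by
        intro hw
        obtain ⟨y, hz'y, hy, hcol⟩ := exists_isMax_col_eq_of_type2_eq hg hg hzz' hzw hw
        exact hz'w (eq_of_isMax_of_col_eq hg hy hw hcol ▸ hz'y)
      exact (hc w z' hw hz').resolve_right hz'w
    exact ⟨z', M.refl z', type2_eq_of_le_of_le hwz' hzw rfl hzz', hwz'⟩
  · rintro z z' w' ⟨-, hzle⟩ hw'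
    exact ⟨w', hzle.trans hw', rfl, M.refl w'⟩

theorem image_type2_subset_of_type3_eq [Finite M.W] [Finite N.W] (hM : M.Generated)
    (hN : N.Generated) (hcN : N.NonmaxComparable) {u u' : M.W} {v v' : N.W}
    (h : M.type3 u = N.type3 v) (huu' : u ≤ u') (h' : M.type2 u' = N.type2 v') :
    M.type2 '' Set.Ici u' ⊆ N.type2 '' Set.Ici v' := by
  rintro _ ⟨w, hw, rfl⟩
  by_cases hwmax : IsMax w
  · obtain ⟨z, hz, hzmax, hcol⟩ := exists_isMax_col_eq_of_type2_eq hM hN h' hw hwmax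
    exact ⟨z, hz, by rw [type2_of_isMax hzmax, type2_of_isMax hwmax, hcol]⟩
  have hmem : M.type2 w ∈ (N.type3 v).2 := h ▸ ⟨w, huu'.trans hw, rfl⟩
  obtain ⟨q, hvq, hqw⟩ := hmem
  have hq : ¬IsMax q := (isMax_iff_of_type1_eq hN hM (type1_eq_of_type2_eq hqw)).not.2 hwmax
  have hv' : ¬IsMax v' := by
    intro hv'
    have hu' : IsMax u' := (isMax_iff_of_type1_eq hM hN (type1_eq_of_type2_eq h')).2 hv'
    exact hwmax (hu'.eq_of_le hw ▸ hu')
  rcases hcN q v' hq hv' with hqv' | hv'q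
  · have hqeq : q = v' := eq_of_le_of_type2_eq hN hcN hqv'
      (type2_eq_of_le_of_le hqv' hw hqw.symm h')
    exact ⟨v', Set.mem_Ici.2 le_rfl, hqeq ▸ hqw⟩
  · exact ⟨q, hv'q, hqw⟩

theorem exists_type3_eq_of_le [Finite M.W] [Finite N.W] (hM : M.Generated) (hN : N.Generated)
    (hcM : M.NonmaxComparable) (hcN : N.NonmaxComparable) {u u' : M.W} {v : N.W}
    (h : M.type3 u = N.type3 v) (huu' : u ≤ u') : ∃ v', v ≤ v' ∧ M.type3 u' = N.type3 v' := by
  have hmem : M.type2 u' ∈ (N.type3 v).2 := h ▸ ⟨u', huu', rfl⟩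
  obtain ⟨v', hvv', h'⟩ := hmem
  refine ⟨v', hvv', Prod.ext (col_eq_of_type2_eq h').symm (Set.Subset.antisymm ?_ ?_)⟩
  · exact image_type2_subset_of_type3_eq hM hN hcN h huu' h'.symm
  · exact image_type2_subset_of_type3_eq hN hM hcM h.symm hvv' h'

theorem bisim_of_type3_eq [Finite M.W] [Finite N.W] (hM : M.Generated) (hN : N.Generated)
    (hcM : M.NonmaxComparable) (hcN : N.NonmaxComparable)
    (h : M.type3 M.root = N.type3 N.root) : M.Bisim N := by
  refine ⟨fun a b => M.type3 a = N.type3 b, h, fun a b hab => congrArg Prod.fst hab,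
    fun a b a' hab ha => exists_type3_eq_of_le hM hN hcM hcN hab ha, fun a b b' hab hb => ?_⟩
  obtain ⟨a', ha, hab'⟩ := exists_type3_eq_of_le hN hM hcN hcM hab.symm hb
  exact ⟨a', ha, hab'.symm⟩

end Model

theorem eq_of_combLe_inr {m : ℕ} {i : Fin m} {x : Fin m ⊕ Fin m} (h : combLe m (.inr i) x) :
    x = .inr i := by
  rcases x with j | j
  · exact h.elim
  · exact congrArg Sum.inr (Eq.symm h)

namespace IsBrokenComb

variable {n m : ℕ} {M : Model n}

theorem finite (h : IsBrokenComb M.frame m) : Finite M.W := by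
  obtain ⟨s, -, f, hf, -⟩ := h
  exact Finite.of_injective (β := Fin m ⊕ Fin m) (fun a => (f a).1)
    (Subtype.val_injective.comp hf.injective)

theorem nonmaxComparable (h : IsBrokenComb M.frame m) : M.NonmaxComparable := by
  obtain ⟨s, -, f, hf, hle⟩ := h
  have base : ∀ a : M.W, ¬IsMax a → ∃ i, (f a).1 = .inl i := by
    intro a ha
    rcases hfa : (f a).1 with i | i
    · exact ⟨i, rfl⟩
    · refine absurd (fun (b : M.W) (hab : a ≤ b) => ?_) ha
      have hb : (f b).1 = .inr i := eq_of_combLe_inr (hfa ▸ (hle a b).1 hab)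
      exact (show b = a from hf.injective (Subtype.ext (hb.trans hfa.symm))).le
  intro a b ha hb
  obtain ⟨i, hi⟩ := base a ha
  obtain ⟨j, hj⟩ := base b hb
  rcases le_total i j with hij | hji
  · exact Or.inl ((hle a b).2 (show combLe m (f a).1 (f b).1 by rw [hi, hj]; exact hij))
  · exact Or.inr ((hle b a).2 (show combLe m (f b).1 (f a).1 by rw [hi, hj]; exact hji))

end IsBrokenComb

/-- Let `P`, `Q` be broken combs and `(P, x)`, `(Q, x')`
`n`-generated models over the same `n` variables based on them. If they are
`3`-bisimilar, then they are fully bisimilar. -/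
theorem statement11 (n : ℕ) (M N : Model n)
    (hM : ∃ m, IsBrokenComb M.frame m) (hN : ∃ m, IsBrokenComb N.frame m)
    (hMg : M.Generated) (hNg : N.Generated)
    (h : M.NBisim N 3) : M.Bisim N := by
  obtain ⟨_, hM⟩ := hM
  obtain ⟨_, hN⟩ := hN
  have := hM.finite
  have := hN.finite
  exact Model.bisim_of_type3_eq hMg hNg hM.nonmaxComparable hN.nonmaxComparable
    (Model.type3_eq_of_nbisimAt h)
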